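/- arXiv:2411.17010 — 9 statements merged into one kernel-verified Lean document; each statement's English description precedes it below -/
import Mathlib

section
/- Let S be a numerical semigroup generated by g_1 < g_2 < ... < g_k and let g = g_1 + ... + g_k. Fix n in S with n > g_1^2 · g. If a factorization z of n attains its maximum coordinate at an index i with 2 ≤ i ≤ k (i.e., max(z) = z_i), then there exists another factorization z' of n with max(z') > max(z). -/
/-!
Since `n ≤ max(z) · (g_1 + ⋯ + g_k)`, the bound on `n` forces `z_i > g_1²`. Then
`t = ⌊z_i / g_1⌋ ≥ g_1` exceeds the remainder `z_i - t g_1 < g_1`, so trading `t g_1` copies of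
`g_i` for `t g_i` copies of `g_1` gives a factorization of `n` whose first coordinate is
`t g_i ≥ t g_1 + t > z_i`.
-/

/-- `z` is a factorization of `n` with respect to the generators `g`. -/
def IsFactorization {k : ℕ} (g : Fin k → ℕ) (n : ℕ) (z : Fin k → ℕ) : Prop :=
  ∑ i, z i * g i = n

theorem sum_add_single_mul {ι R : Type*} [Fintype ι] [DecidableEq ι]
    [NonUnitalNonAssocSemiring R] (g w : ι → R) (a : ι) (c : R) :
    ∑ x, (w + Pi.single a c : ι → R) x * g x = ∑ x, w x * g x + c * g a := by
  simp [add_mul, Finset.sum_add_distrib, Pi.single_apply]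

namespace IsFactorization

variable {k n : ℕ} {g z : Fin k → ℕ}

theorem le_sup_mul_sum (hz : IsFactorization g n z) : n ≤ Finset.univ.sup z * ∑ i, g i := by
  rw [← hz, Finset.mul_sum]
  exact Finset.sum_le_sum fun j _ => Nat.mul_le_mul_right _ (Finset.le_sup (Finset.mem_univ j))

theorem exchange (hz : IsFactorization g n z) {i j : Fin k} {t : ℕ} (ht : t * g j ≤ z i) :
    IsFactorization g n (Function.update z i (z i - t * g j) + Pi.single j (t * g i)) := by
  set w := Function.update z i (z i - t * g j)
  have hzw : z = w + Pi.single i (t * g j) := by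
    ext x
    rcases eq_or_ne x i with rfl | hx
    · simp [w, Nat.sub_add_cancel ht]
    · simp [w, hx]
  unfold IsFactorization
  rw [sum_add_single_mul, ← hz, hzw, sum_add_single_mul]
  ring

end IsFactorization

theorem lt_div_mul_of_sq_le {a b m : ℕ} (ha : 0 < a) (hab : a < b) (hm : a ^ 2 ≤ m) :
    m < m / a * b := by
  have hdiv : a ≤ m / a := (Nat.le_div_iff_mul_le ha).2 (by nlinarith)
  have hmod : m % a < a := Nat.mod_lt m ha
  calc m = m / a * a + m % a := (Nat.div_add_mod' m a).symm
    _ < m / a * a + m / a := by omega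
    _ = m / a * (a + 1) := by ring
    _ ≤ m / a * b := Nat.mul_le_mul_left _ hab

theorem stmt1 {k : ℕ} (g : Fin (k + 1) → ℕ) (hpos : ∀ i, 0 < g i) (hmono : StrictMono g)
    (n : ℕ) (hn : n > (g 0) ^ 2 * ∑ i, g i)
    (z : Fin (k + 1) → ℕ) (hz : IsFactorization g n z)
    (i : Fin (k + 1)) (hi : i ≠ 0) (hmax : Finset.univ.sup z = z i) :
    ∃ z' : Fin (k + 1) → ℕ, IsFactorization g n z' ∧
      Finset.univ.sup z' > Finset.univ.sup z := by
  have hgi : g 0 < g i := hmono (Fin.pos_iff_ne_zero.2 hi)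
  have hzi : g 0 ^ 2 < z i :=
    Nat.lt_of_mul_lt_mul_right (hmax ▸ hn.trans_le hz.le_sup_mul_sum)
  set t := z i / g 0
  set z' : Fin (k + 1) → ℕ := Function.update z i (z i - t * g 0) + Pi.single 0 (t * g i)
  refine ⟨z', hz.exchange (Nat.div_mul_le_self (z i) (g 0)), ?_⟩
  calc Finset.univ.sup z = z i := hmax
    _ < t * g i := lt_div_mul_of_sq_le (hpos 0) hgi hzi.le
    _ ≤ z' 0 := by simp [z']
    _ ≤ Finset.univ.sup z' := Finset.le_sup (Finset.mem_univ 0)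
end

section
/- Let S be a numerical semigroup generated by g_1 < g_2 < ... < g_k, let g = g_1 + ... + g_k, and write the Apéry set Ap(S; g_1) = {a_0, a_1, ..., a_{g_1 - 1}} where a_j ≡ j (mod g_1). For all n in S with n > g_1^2 · g and n ≡ i (mod g_1), the maximum infinity-length over all factorizations of n equals (n - a_i)/g_1. -/
/-- Membership in the numerical semigroup generated by `g`. -/
def MemSgp {k : ℕ} (g : Fin k → ℕ) (n : ℕ) : Prop :=
  ∃ z, IsFactorization g n z

/-!
Write `m = g 0`, `T = ∑ i, g i` and `t = (n - a) / m`; every element of the semigroup congruent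
to `n` modulo `m` is at least `a`. For a factorization `z` of `n` with largest coordinate `l` this
gives `a + z l * m ≤ n`: if `l = 0` because `n - z 0 * m` lies in the semigroup; otherwise, with
`q = z l / m`, because `n - q * m * g l` does and `z l ≤ q * g l`, which holds as `g l > m` and
`z l > m²` (forced by `n ≤ z l * T` and `n > m² T`). Conversely, a factorization of `a` has no
`g 0` part (else `a - m` would be in the semigroup), so adding `t` copies of `g 0` to it gives a
factorization of `n`; its other coordinates are at most `a ≤ (m - 1) T < t`.
-/

open Finset Function

section Factorization

variable {k : ℕ} {g : Fin k → ℕ} {n : ℕ} {z : Fin k → ℕ}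

theorem sum_update_mul_add (z g : Fin k → ℕ) (j : Fin k) (v : ℕ) :
    ∑ i, update z j v i * g i + z j * g j = ∑ i, z i * g i + v * g j := by
  rw [← add_sum_erase _ _ (mem_univ j), ← add_sum_erase _ (fun i ↦ z i * g i) (mem_univ j),
    update_self, sum_congr rfl fun i hi ↦ by rw [update_of_ne (ne_of_mem_erase hi)]]
  ring

theorem IsFactorization.mul_le (hz : IsFactorization g n z) (i : Fin k) : z i * g i ≤ n :=
  hz ▸ single_le_sum (f := fun i ↦ z i * g i) (fun _ _ ↦ Nat.zero_le _) (mem_univ i)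

theorem IsFactorization.update_add (hz : IsFactorization g n z) (j : Fin k) (c : ℕ) :
    IsFactorization g (n + c * g j) (update z j (z j + c)) := by
  have := sum_update_mul_add z g j (z j + c)
  unfold IsFactorization at hz ⊢
  linarith

theorem IsFactorization.memSgp_sub (hz : IsFactorization g n z) {j : Fin k} {c : ℕ}
    (hc : c ≤ z j) : MemSgp g (n - c * g j) := by
  refine ⟨update z j (z j - c), ?_⟩
  have hsum := sum_update_mul_add z g j (z j - c)
  have hle := Nat.mul_le_mul_right (g j) hc
  have hsplit : (z j - c) * g j + c * g j = z j * g j := by rw [← add_mul, Nat.sub_add_cancel hc]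
  unfold IsFactorization at hz ⊢
  omega

theorem IsFactorization.le_sup_mul_sum_s2 (hz : IsFactorization g n z) :
    n ≤ univ.sup z * ∑ i, g i := by
  rw [← hz, mul_sum]
  exact sum_le_sum fun i _ ↦ Nat.mul_le_mul_right _ (le_sup (mem_univ i))

end Factorization

section Apery

variable {k : ℕ} {g : Fin k → ℕ} {j : Fin k} {n a : ℕ}

theorem add_mul_le_of_memSgp_sub
    (ha : IsLeast {s | MemSgp g s ∧ s ≡ n [MOD g j]} a) {b c : ℕ} (hb : b ≡ n [MOD g j])
    (hs : MemSgp g (b - c * g j)) (hc : c * g j ≤ b) : a + c * g j ≤ b := by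
  have hmod : b - c * g j ≡ b [MOD g j] := by
    rw [mul_comm] at hc ⊢
    exact Nat.sub_mul_mod hc
  have := ha.2 ⟨hs, hmod.trans hb⟩
  omega

theorem le_pred_mul_sum (ha : IsLeast {s | MemSgp g s ∧ s ≡ n [MOD g j]} a)
    (hj : 0 < g j) (hn : MemSgp g n) : a ≤ (g j - 1) * ∑ i, g i := by
  obtain ⟨z, hz⟩ := hn
  have hsplit : n = ∑ i, z i % g j * g i + (∑ i, z i / g j * g i) * g j := by
    rw [← hz, sum_mul, ← sum_add_distrib]
    refine sum_congr rfl fun i _ ↦ ?_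
    conv_lhs => rw [← Nat.mod_add_div (z i) (g j)]
    ring
  have hmod : ∑ i, z i % g j * g i ≡ n [MOD g j] := by
    conv_rhs => rw [hsplit]
    exact (Nat.add_mul_mod_self_right _ _ _).symm
  refine (ha.2 ⟨⟨_, rfl⟩, hmod⟩).trans ?_
  rw [mul_sum]
  exact sum_le_sum fun i _ ↦ Nat.mul_le_mul_right _ (Nat.le_pred_of_lt (Nat.mod_lt _ hj))

theorem exists_isFactorization_apply_eq_zero
    (ha : IsLeast {s | MemSgp g s ∧ s ≡ n [MOD g j]} a) (hj : 0 < g j) :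
    ∃ w, IsFactorization g a w ∧ w j = 0 := by
  obtain ⟨⟨w, hw⟩, hres⟩ := ha.1
  refine ⟨w, hw, Nat.eq_zero_of_not_pos fun hwj ↦ ?_⟩
  have hga : 1 * g j ≤ a := (Nat.mul_le_mul_right _ hwj).trans (hw.mul_le j)
  have := add_mul_le_of_memSgp_sub ha hres (hw.memSgp_sub hwj) hga
  omega

theorem IsFactorization.add_mul_le_of_le_apply
    (ha : IsLeast {s | MemSgp g s ∧ s ≡ n [MOD g j]} a) {z : Fin k → ℕ}
    (hj : 0 < g j) (hz : IsFactorization g n z) {l : Fin k} (hjl : g j < g l)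
    (hzl : (g j - 1) * g j ≤ z l) : a + z l * g j ≤ n := by
  set q := z l / g j
  have hq : g j - 1 ≤ q := (Nat.le_div_iff_mul_le hj).mpr hzl
  have hzq : z l ≤ q * g l :=
    calc z l = g j * q + z l % g j := (Nat.div_add_mod _ _).symm
      _ ≤ g j * q + q := by have := Nat.mod_lt (z l) hj; omega
      _ = q * (g j + 1) := by ring
      _ ≤ q * g l := Nat.mul_le_mul_left _ hjl
  have hcut : (q * g l) * g j ≤ n := by
    rw [mul_right_comm]
    exact (Nat.mul_le_mul_right _ (Nat.div_mul_le_self _ _)).trans (hz.mul_le l)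
  have hs : MemSgp g (n - (q * g l) * g j) := by
    rw [mul_right_comm]
    exact hz.memSgp_sub (Nat.div_mul_le_self _ _)
  have := add_mul_le_of_memSgp_sub ha rfl hs hcut
  have := Nat.mul_le_mul_right (g j) hzq
  omega

theorem lt_of_add_mul_eq (ha : IsLeast {s | MemSgp g s ∧ s ≡ n [MOD g j]} a)
    (hj : 0 < g j) (hn : MemSgp g n) (hbig : g j ^ 2 * ∑ i, g i < n) {t : ℕ}
    (hat : a + t * g j = n) : a < t := by
  obtain ⟨u, hu⟩ : ∃ u, g j = u + 1 := Nat.exists_eq_succ_of_ne_zero hj.ne'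
  have hapery := le_pred_mul_sum ha hj hn
  rw [hu, Nat.add_sub_cancel] at hapery
  rw [hu] at hat hbig
  generalize ∑ i, g i = T at hapery hbig
  by_contra! hta
  nlinarith [Nat.mul_le_mul_right (u + 2) hapery, Nat.mul_le_mul_right (u + 1) hta]

theorem exists_isFactorization_sup_eq (hg : ∀ i, 0 < g i)
    (ha : IsLeast {s | MemSgp g s ∧ s ≡ n [MOD g j]} a) {t : ℕ} (hat : a < t)
    (hn : a + t * g j = n) : ∃ z, IsFactorization g n z ∧ univ.sup z = t := by
  obtain ⟨w, hw, hwj⟩ := exists_isFactorization_apply_eq_zero ha (hg j)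
  refine ⟨update w j t, by simpa [hwj, hn] using hw.update_add j t, ?_⟩
  refine le_antisymm (Finset.sup_le fun i _ ↦ ?_) ?_
  · rcases eq_or_ne i j with rfl | hi
    · simp
    · rw [update_of_ne hi]
      have := Nat.le_mul_of_pos_right (w i) (hg i)
      have := hw.mul_le i
      omega
  · simpa using le_sup (f := update w j t) (mem_univ j)

theorem IsFactorization.add_sup_mul_le (ha : IsLeast {s | MemSgp g s ∧ s ≡ n [MOD g j]} a)
    (hj : 0 < g j) (hjl : ∀ l, l ≠ j → g j < g l) (hbig : g j ^ 2 * ∑ i, g i < n)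
    {z : Fin k → ℕ} (hz : IsFactorization g n z) : a + univ.sup z * g j ≤ n := by
  obtain ⟨l, -, hl⟩ := exists_mem_eq_sup univ ⟨j, mem_univ j⟩ z
  have hzl : g j ^ 2 < z l :=
    Nat.lt_of_mul_lt_mul_right (hbig.trans_le (hl ▸ hz.le_sup_mul_sum_s2))
  rw [hl]
  rcases eq_or_ne l j with rfl | hlj
  · exact add_mul_le_of_memSgp_sub ha rfl (hz.memSgp_sub le_rfl) (hz.mul_le l)
  · exact hz.add_mul_le_of_le_apply ha hj (hjl l hlj)
      ((Nat.mul_le_mul_right _ (Nat.sub_le _ _)).trans (sq (g j) ▸ hzl.le))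

end Apery

theorem stmt2 {k : ℕ} (g : Fin (k + 1) → ℕ) (hpos : ∀ i, 0 < g i) (hmono : StrictMono g)
    (n : ℕ) (hn : MemSgp g n) (hbig : n > (g 0) ^ 2 * ∑ i, g i)
    (a : ℕ) (haS : MemSgp g a) (hares : a % g 0 = n % g 0)
    (hamin : ∀ s, MemSgp g s → s % g 0 = n % g 0 → a ≤ s) :
    IsGreatest {m | ∃ z, IsFactorization g n z ∧ m = Finset.univ.sup z}
      ((n - a) / g 0) := by
  have ha : IsLeast {s | MemSgp g s ∧ s ≡ n [MOD g 0]} a :=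
    ⟨⟨haS, hares⟩, fun s hs ↦ hamin s hs.1 hs.2⟩
  have han : a + (n - a) / g 0 * g 0 = n := by
    have := ha.2 ⟨hn, rfl⟩
    have := Nat.div_mul_cancel ((Nat.modEq_iff_dvd' this).mp hares)
    omega
  refine ⟨?_, ?_⟩
  · obtain ⟨z, hz, hsup⟩ := exists_isFactorization_sup_eq hpos ha
      (lt_of_add_mul_eq ha (hpos 0) hn hbig han) han
    exact ⟨z, hz, hsup.symm⟩
  · rintro _ ⟨z, hz, rfl⟩
    have := hz.add_sup_mul_le ha (hpos 0) (fun l hl ↦ hmono (Fin.pos_of_ne_zero hl)) hbig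
    rw [Nat.le_div_iff_mul_le (hpos 0)]
    omega
end

section
/- Let S be a numerical semigroup generated by g_1, ..., g_k, let g = g_1 + ... + g_k, and write Ap(S; g) = {0, a_1, ..., a_{g-1}} with a_j ≡ j (mod g). For n in S with n > g^2, letting i in {0, 1, ..., g-1} satisfy i ≡ -n (mod g), the minimum infinity-length over all factorizations of n equals (n + a_i)/g. -/
/-!
Write `G = ∑ gᵢ` and `a` for the Apéry element with `a ≡ -n (mod G)`. If `z` factors `n` with
`max z = m`, then `(m - zᵢ)ᵢ` factors `mG - n`, an element of `S` congruent to `a`, so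
`a ≤ mG - n`. Conversely, a factorization `y` of `a` has a zero coordinate (otherwise `a - G ∈ S`)
and all coordinates below `G` (otherwise trading `G` copies of `gᵢ` for one copy of every generator
gives a factorization of `a` without zero coordinates). As `n > G²` forces `M = (n + a) / G ≥ G`,
the tuple `(M - yᵢ)ᵢ` factors `n` with maximum exactly `M`.
-/

open Finset

theorem sum_tsub_mul_add_sum_mul {ι : Type*} [Fintype ι] (g x y : ι → ℕ) (hxy : ∀ i, x i ≤ y i) :
    ∑ i, (y i - x i) * g i + ∑ i, x i * g i = ∑ i, y i * g i := by
  rw [← sum_add_distrib]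
  exact sum_congr rfl fun i _ => by rw [← add_mul, Nat.sub_add_cancel (hxy i)]

/-- `a ∈ Ap(S; m)`, phrased as minimality of `a` in `S` within its residue class modulo `m`. -/
def IsAperyElement {k : ℕ} (g : Fin k → ℕ) (m a : ℕ) : Prop :=
  IsLeast {s | MemSgp g s ∧ s ≡ a [MOD m]} a

namespace IsAperyElement

variable {k : ℕ} {g : Fin k → ℕ} {a : ℕ}

theorem exists_eq_zero (ha : IsAperyElement g (∑ i, g i) a) (hG : 0 < ∑ i, g i)
    {y : Fin k → ℕ} (hy : IsFactorization g a y) : ∃ i, y i = 0 := by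
  by_contra! hy0
  rw [IsFactorization] at hy
  have hsub : ∑ i, (y i - 1) * g i + ∑ i, g i = a := by
    simpa [hy] using
      sum_tsub_mul_add_sum_mul g (fun _ => 1) y fun i => Nat.one_le_iff_ne_zero.2 (hy0 i)
  have hle := ha.2 ⟨⟨_, rfl⟩, hsub ▸ Nat.add_modEq_right.symm⟩
  omega

theorem factorization_lt_sum (ha : IsAperyElement g (∑ i, g i) a) (hpos : ∀ i, 0 < g i)
    {y : Fin k → ℕ} (hy : IsFactorization g a y) (i : Fin k) : y i < ∑ i, g i := by
  set G := ∑ i, g i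
  by_contra! hyi
  rw [IsFactorization] at hy
  have hgi : g i ≤ G := single_le_sum (fun j _ => Nat.zero_le (g j)) (mem_univ i)
  have hsingle : ∀ j, (Pi.single i G : Fin k → ℕ) j ≤ y j := fun j => by
    rcases eq_or_ne j i with rfl | hj <;> simp [*]
  have hy' : IsFactorization g a fun j => y j + g i - (Pi.single i G : Fin k → ℕ) j := by
    have h := sum_tsub_mul_add_sum_mul g _ (fun j => y j + g i) fun j =>
      (hsingle j).trans le_self_add
    have h1 : ∑ j, (Pi.single i G : Fin k → ℕ) j * g j = G * g i := by simp [Pi.single_apply]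
    have h2 : ∑ j, (y j + g i) * g j = a + g i * G := by
      simp only [add_mul, sum_add_distrib, ← mul_sum, hy]; rfl
    rw [h1, h2, mul_comm G] at h
    exact Nat.add_right_cancel h
  obtain ⟨j, hj⟩ := ha.exists_eq_zero ((hpos i).trans_le hgi) hy'
  have := hsingle j
  have := hpos i
  omega

theorem exists_isFactorization_sup_eq (ha : IsAperyElement g (∑ i, g i) a) (hpos : ∀ i, 0 < g i)
    (hG : 0 < ∑ i, g i) {n M : ℕ} (hM : ∑ i, g i ≤ M) (hn : n + a = M * ∑ i, g i) :
    ∃ z, IsFactorization g n z ∧ univ.sup z = M := by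
  obtain ⟨y, hy⟩ := ha.1.1
  rw [IsFactorization] at hy
  have hyM : ∀ i, y i ≤ M := fun i => (ha.factorization_lt_sum hpos hy i).le.trans hM
  obtain ⟨i₀, hi₀⟩ := ha.exists_eq_zero hG hy
  refine ⟨fun i => M - y i, ?_, ?_⟩
  · have h := sum_tsub_mul_add_sum_mul g y (fun _ => M) hyM
    rw [hy, ← mul_sum] at h
    show ∑ i, (M - y i) * g i = n
    omega
  · exact le_antisymm (Finset.sup_le fun i _ => Nat.sub_le M (y i))
      (by simpa [hi₀] using le_sup (f := fun i => M - y i) (mem_univ i₀))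

theorem add_le_sup_mul (ha : IsAperyElement g (∑ i, g i) a) {n : ℕ} (hdvd : ∑ i, g i ∣ n + a)
    {z : Fin k → ℕ} (hz : IsFactorization g n z) : n + a ≤ univ.sup z * ∑ i, g i := by
  set m := univ.sup z
  have h := sum_tsub_mul_add_sum_mul g z (fun _ => m) fun i => le_sup (mem_univ i)
  rw [hz, ← mul_sum] at h
  have hmod : ∑ i, (m - z i) * g i ≡ a [MOD ∑ i, g i] := by
    refine Nat.ModEq.add_right_cancel' n ?_
    rw [h, add_comm a]
    exact (Nat.modEq_zero_iff_dvd.2 (dvd_mul_left _ _)).trans (Nat.modEq_zero_iff_dvd.2 hdvd).symm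
  have := ha.2 ⟨⟨_, rfl⟩, hmod⟩
  omega

end IsAperyElement

theorem stmt5_general {k : ℕ} (g : Fin k → ℕ) (hpos : ∀ i, 0 < g i)
    (n : ℕ) (hbig : n > (∑ i, g i) ^ 2)
    (a : ℕ) (haS : MemSgp g a) (hares : (a + n) % (∑ i, g i) = 0)
    (hamin : ∀ s, MemSgp g s → (s + n) % (∑ i, g i) = 0 → a ≤ s) :
    IsLeast {m | ∃ z, IsFactorization g n z ∧ m = Finset.univ.sup z}
      ((n + a) / ∑ i, g i) := by
  set G := ∑ i, g i
  have hdvd : G ∣ n + a := Nat.dvd_of_mod_eq_zero (add_comm a n ▸ hares)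
  have hG : 0 < G := Nat.pos_of_ne_zero fun h0 => by simp [h0] at hares; omega
  have ha : IsAperyElement g G a :=
    ⟨⟨haS, rfl⟩, fun s ⟨hs, hsa⟩ => hamin s hs (Eq.trans (hsa.add_right n) hares)⟩
  have hM : (n + a) / G * G = n + a := Nat.div_mul_cancel hdvd
  have hGM : G ≤ (n + a) / G := (Nat.le_div_iff_mul_le hG).2 (by rw [← sq]; omega)
  obtain ⟨z, hz, hsup⟩ := ha.exists_isFactorization_sup_eq hpos hG hGM hM.symm
  refine ⟨⟨z, hz, hsup.symm⟩, ?_⟩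
  rintro m ⟨z, hz, rfl⟩
  exact Nat.le_of_mul_le_mul_right (by rw [hM]; exact ha.add_le_sup_mul hdvd hz) hG

theorem stmt5 {k : ℕ} (g : Fin k → ℕ) (hpos : ∀ i, 0 < g i)
    (n : ℕ) (hn : MemSgp g n) (hbig : n > (∑ i, g i) ^ 2)
    (a : ℕ) (haS : MemSgp g a) (hares : (a + n) % (∑ i, g i) = 0)
    (hamin : ∀ s, MemSgp g s → (s + n) % (∑ i, g i) = 0 → a ≤ s) :
    IsLeast {m | ∃ z, IsFactorization g n z ∧ m = Finset.univ.sup z}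
      ((n + a) / ∑ i, g i) :=
  stmt5_general g hpos n hbig a haS hares hamin
end

section
/- Fix positive integers g_1, ..., g_k and let N = g_1^2 + ... + g_k^2. Fix n ≥ 0. If z in Z^k minimizes z_1^2 + ... + z_k^2 among all integer solutions of x_1 g_1 + ... + x_k g_k = n, then z + (g_1, ..., g_k) minimizes the same quantity among all integer solutions of x_1 g_1 + ... + x_k g_k = n + N. -/
/-! Shifting by `g` maps the solutions of `⟪x, g⟫ = n` bijectively onto those of
`⟪x, g⟫ = n + ‖g‖²`, and on the former it raises `‖x‖²` by the constant `2n + ‖g‖²`;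
so it carries minimizers to minimizers. -/

/-- The squared 2-norm of an integer tuple. -/
def ellTwo {k : ℕ} (z : Fin k → ℤ) : ℤ := ∑ i, (z i) ^ 2

theorem ellTwo_add {k : ℕ} (a b : Fin k → ℤ) :
    ellTwo (a + b) = ellTwo a + 2 * ∑ i, a i * b i + ellTwo b := by
  simp only [ellTwo, Pi.add_apply, Finset.mul_sum, ← Finset.sum_add_distrib]
  exact Finset.sum_congr rfl fun i _ => by ring

theorem sum_add_mul_eq {k : ℕ} (a b g : Fin k → ℤ) :
    ∑ i, (a i + b i) * g i = ∑ i, a i * g i + ∑ i, b i * g i := by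
  simp only [add_mul, Finset.sum_add_distrib]

theorem ellTwo_add_of_sum_mul_eq {k : ℕ} {a g : Fin k → ℤ} {n : ℤ}
    (h : ∑ i, a i * g i = n) : ellTwo (a + g) = ellTwo a + 2 * n + ellTwo g := by
  rw [ellTwo_add, h]

theorem stmt7_general {k : ℕ} (g : Fin k → ℤ)
    (n : ℤ) (z : Fin k → ℤ)
    (hz : ∑ i, z i * g i = n)
    (hmin : ∀ x : Fin k → ℤ, ∑ i, x i * g i = n → ellTwo z ≤ ellTwo x) :
    (∑ i, (z i + g i) * g i = n + ∑ i, (g i) ^ 2) ∧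
      ∀ x : Fin k → ℤ, ∑ i, x i * g i = n + ∑ i, (g i) ^ 2 →
        ellTwo (fun i => z i + g i) ≤ ellTwo x := by
  have hgg : ∑ i, g i * g i = ∑ i, g i ^ 2 := Finset.sum_congr rfl fun i _ => (sq (g i)).symm
  refine ⟨by rw [sum_add_mul_eq, hz, hgg], fun x hx => ?_⟩
  have hshift : ∑ i, (x i - g i) * g i = n := by
    have hsplit := sum_add_mul_eq (x - g) g g
    simp only [Pi.sub_apply, sub_add_cancel, hgg, hx] at hsplit
    linarith
  calc ellTwo (z + g) = ellTwo z + 2 * n + ellTwo g := ellTwo_add_of_sum_mul_eq hz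
    _ ≤ ellTwo (x - g) + 2 * n + ellTwo g := by linarith [hmin (x - g) hshift]
    _ = ellTwo x := by rw [← ellTwo_add_of_sum_mul_eq (a := x - g) hshift, sub_add_cancel]

theorem stmt7 {k : ℕ} (g : Fin k → ℤ) (hpos : ∀ i, 0 < g i)
    (n : ℤ) (hn : 0 ≤ n) (z : Fin k → ℤ)
    (hz : ∑ i, z i * g i = n)
    (hmin : ∀ x : Fin k → ℤ, ∑ i, x i * g i = n → ellTwo z ≤ ellTwo x) :
    (∑ i, (z i + g i) * g i = n + ∑ i, (g i) ^ 2) ∧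
      ∀ x : Fin k → ℤ, ∑ i, x i * g i = n + ∑ i, (g i) ^ 2 →
        ellTwo (fun i => z i + g i) ≤ ellTwo x :=
  stmt7_general g n z hz hmin
end

section
/- An element u = 2^a · 5^b · 7^c of the arithmetical congruence monoid M_{4,6} = {1} ∪ {n ≡ 4 mod 6} is irreducible in M_{4,6} (i.e., u > 1 and u cannot be written as a product of two elements of M_{4,6} both greater than 1) if and only if either (a = 2 and b = 0) or (a = 1 and b is odd). -/
/-- The arithmetical congruence monoid `M_{4,6}` as a subset of `ℕ`. -/
def M46 : Set ℕ := {n | n = 1 ∨ (1 ≤ n ∧ n % 6 = 4)}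

/-- An atom (irreducible element) of `M_{4,6}`. -/
def IsAtom46 (u : ℕ) : Prop :=
  u ∈ M46 ∧ 1 < u ∧ ∀ v w, v ∈ M46 → w ∈ M46 → u = v * w → v = 1 ∨ w = 1

/-!
Modulo 3 we have `5 ≡ 2` and `7 ≡ 1`, so `u = 2^a 5^b 7^c ≠ 1` lies in `M_{4,6}` exactly when
`a ≥ 1` and `a + b` is even. If `a ≥ 3` or `a = 2, b ≥ 2`, then `u` splits off the factor `4` resp. `10`.
Conversely, a product of two non-units of `M_{4,6}` is divisible by `4`, so `2 · odd` is an atom;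
and `4 · 7^c` would have to split as `(2 · 7^i)(2 · 7^j)`, but `2 · 7^i ≡ 2 (mod 3)`.
-/

lemma mem_M46_iff {n : ℕ} : n ∈ M46 ↔ n = 1 ∨ (2 ∣ n ∧ n % 3 = 1) := by
  simp only [M46, Set.mem_ofPred_eq]
  omega

lemma two_pow_mod_three (k : ℕ) : 2 ^ k % 3 = if Even k then 1 else 2 := by
  induction k with
  | zero => simp
  | succ k ih =>
    rw [pow_succ, Nat.mul_mod, ih]
    by_cases hk : Even k <;> simp [hk, Nat.even_add_one]

lemma seven_pow_mod_three (k : ℕ) : 7 ^ k % 3 = 1 := by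
  simp [Nat.pow_mod]

lemma pow_mul_pow_mul_pow_mod_three (a b c : ℕ) :
    2 ^ a * 5 ^ b * 7 ^ c % 3 = 2 ^ (a + b) % 3 := by
  rw [Nat.mul_mod, seven_pow_mod_three, Nat.mul_mod (2 ^ a), Nat.pow_mod 5, pow_add,
    Nat.mul_mod (2 ^ a)]
  simp

lemma pow_mul_pow_mul_pow_mem_M46_iff {a : ℕ} (b c : ℕ) (ha : a ≠ 0) :
    2 ^ a * 5 ^ b * 7 ^ c ∈ M46 ↔ Even (a + b) := by
  have h2 : 2 ∣ 2 ^ a * 5 ^ b * 7 ^ c := (dvd_pow_self 2 ha).mul_right _ |>.mul_right _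
  have h3 := pow_mul_pow_mul_pow_mod_three a b c
  rw [two_pow_mod_three] at h3
  rw [mem_M46_iff]
  split_ifs at h3 with hab <;> simp only [hab, iff_true, iff_false] <;> omega

lemma one_lt_two_pow_mul_pow_mul_pow {a : ℕ} (b c : ℕ) (ha : a ≠ 0) : 1 < 2 ^ a * 5 ^ b * 7 ^ c :=
  calc 1 < 2 ^ a := Nat.one_lt_two_pow ha
    _ ≤ 2 ^ a * 5 ^ b * 7 ^ c := by rw [mul_assoc]; exact Nat.le_mul_of_pos_right _ (by positivity)

lemma odd_five_pow_mul_seven_pow (b c : ℕ) : Odd (5 ^ b * 7 ^ c) :=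
  (Odd.pow (by decide)).mul (Odd.pow (by decide))

lemma exists_eq_two_mul_of_mem_M46 {n : ℕ} (h : n ∈ M46) (hn : n ≠ 1) :
    ∃ m, n = 2 * m ∧ m % 3 = 2 :=
  ⟨n / 2, by simp only [M46, Set.mem_ofPred_eq] at h; omega⟩

lemma not_isAtom46_mul {v w : ℕ} (hv : v ∈ M46) (hw : w ∈ M46) (hv1 : 1 < v) (hw1 : 1 < w) :
    ¬ IsAtom46 (v * w) := fun ⟨_, _, h⟩ => by
  rcases h v w hv hw rfl with rfl | rfl <;> omega

lemma IsAtom46.even {n : ℕ} (h : IsAtom46 n) : Even n := by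
  rcases mem_M46_iff.1 h.1 with h1 | ⟨h2, -⟩
  · exact absurd h1 h.2.1.ne'
  · exact even_iff_two_dvd.2 h2

lemma isAtom46_two_mul_of_odd {m : ℕ} (hm : Odd m) (hmem : 2 * m ∈ M46) : IsAtom46 (2 * m) := by
  refine ⟨hmem, by have := hm.pos; omega, fun v w hv hw huvw => ?_⟩
  by_contra! hvw
  obtain ⟨v', rfl, -⟩ := exists_eq_two_mul_of_mem_M46 hv hvw.1
  obtain ⟨w', rfl, -⟩ := exists_eq_two_mul_of_mem_M46 hw hvw.2
  have : m = 2 * (v' * w') := by linarith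
  exact Nat.not_even_iff_odd.2 hm ⟨v' * w', by omega⟩

lemma isAtom46_four_mul_seven_pow (c : ℕ) : IsAtom46 (4 * 7 ^ c) := by
  have h7 := seven_pow_mod_three c
  refine ⟨mem_M46_iff.2 (Or.inr ⟨⟨2 * 7 ^ c, by ring⟩, by omega⟩),
    by have := Nat.one_le_pow c 7 (by norm_num); omega, fun v w hv hw huvw => ?_⟩
  by_contra! hvw
  obtain ⟨v', rfl, hv'⟩ := exists_eq_two_mul_of_mem_M46 hv hvw.1
  obtain ⟨w', rfl, -⟩ := exists_eq_two_mul_of_mem_M46 hw hvw.2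
  have hdvd : v' ∣ 7 ^ c := ⟨w', by linarith⟩
  obtain ⟨i, -, rfl⟩ := (Nat.dvd_prime_pow (by norm_num : Nat.Prime 7)).1 hdvd
  rw [seven_pow_mod_three] at hv'
  omega

lemma not_isAtom46_pow_add_mul_pow_add_mul_pow {a₁ a₂ b₁ b₂ : ℕ} (c : ℕ) (ha₁ : a₁ ≠ 0)
    (ha₂ : a₂ ≠ 0) (h₁ : Even (a₁ + b₁)) (h₂ : Even (a₂ + b₂)) :
    ¬ IsAtom46 (2 ^ (a₁ + a₂) * 5 ^ (b₁ + b₂) * 7 ^ c) := by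
  have hsplit : 2 ^ (a₁ + a₂) * 5 ^ (b₁ + b₂) * 7 ^ c
      = (2 ^ a₁ * 5 ^ b₁ * 7 ^ 0) * (2 ^ a₂ * 5 ^ b₂ * 7 ^ c) := by ring
  rw [hsplit]
  exact not_isAtom46_mul ((pow_mul_pow_mul_pow_mem_M46_iff b₁ 0 ha₁).2 h₁)
    ((pow_mul_pow_mul_pow_mem_M46_iff b₂ c ha₂).2 h₂) (one_lt_two_pow_mul_pow_mul_pow b₁ 0 ha₁)
    (one_lt_two_pow_mul_pow_mul_pow b₂ c ha₂)

theorem stmt11_general (a b c : ℕ) :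
    IsAtom46 (2 ^ a * 5 ^ b * 7 ^ c) ↔ ((a = 2 ∧ b = 0) ∨ (a = 1 ∧ Odd b)) := by
  constructor
  · intro hu
    have ha : a ≠ 0 := by
      rintro rfl
      rw [pow_zero, one_mul] at hu
      exact Nat.not_even_iff_odd.2 (odd_five_pow_mul_seven_pow b c) hu.even
    have hab := (pow_mul_pow_mul_pow_mem_M46_iff b c ha).1 hu.1
    obtain rfl | rfl | ha3 : a = 1 ∨ a = 2 ∨ 3 ≤ a := by omega
    · exact Or.inr ⟨rfl, by simpa [parity_simps] using hab⟩
    · refine Or.inl ⟨rfl, by_contra fun hb => ?_⟩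
      have := not_isAtom46_pow_add_mul_pow_add_mul_pow (b₁ := 1) (b₂ := b - 1) c one_ne_zero
        one_ne_zero (by decide) (Nat.even_iff.2 (by have := Nat.even_iff.1 hab; omega))
      rw [show 1 + (b - 1) = b by omega] at this
      exact this hu
    · have := not_isAtom46_pow_add_mul_pow_add_mul_pow (a₁ := 2) (a₂ := a - 2) (b₁ := 0)
        (b₂ := b) c two_ne_zero (by omega) (by decide)
        (Nat.even_iff.2 (by have := Nat.even_iff.1 hab; omega))
      rw [show 2 + (a - 2) = a by omega, zero_add] at this
      exact absurd hu this
  · rintro (⟨rfl, rfl⟩ | ⟨rfl, hb⟩)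
    · simpa using isAtom46_four_mul_seven_pow c
    · have hmem := (pow_mul_pow_mul_pow_mem_M46_iff b c one_ne_zero).2
        (by simpa [parity_simps] using hb)
      rw [pow_one, mul_assoc] at hmem ⊢
      exact isAtom46_two_mul_of_odd (odd_five_pow_mul_seven_pow b c) hmem

theorem stmt11 (a b c : ℕ) (hu : 2 ^ a * 5 ^ b * 7 ^ c ∈ M46) :
    IsAtom46 (2 ^ a * 5 ^ b * 7 ^ c) ↔ ((a = 2 ∧ b = 0) ∨ (a = 1 ∧ Odd b)) :=
  stmt11_general a b c
end

section
/- In the arithmetical congruence monoid M_{6,6} = {1} ∪ {n ≥ 1 : n ≡ 0 (mod 6)}, every element that is a product of two or more atoms can be written as a product of exactly two atoms; consequently the minimum factorization length of every reducible element of M_{6,6} is 2. -/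
/-- The arithmetical congruence monoid `M_{6,6}` as a subset of `ℕ`. -/
def M66 : Set ℕ := {n | n = 1 ∨ (1 ≤ n ∧ n % 6 = 0)}

/-- An atom (irreducible element) of `M_{6,6}`. -/
def IsAtom66 (u : ℕ) : Prop :=
  u ∈ M66 ∧ 1 < u ∧ ∀ v w, v ∈ M66 → w ∈ M66 → u = v * w → v = 1 ∨ w = 1

/-!
The atoms of `M_{6,6}` are exactly the positive multiples of `6` not divisible by `36`.
A product of at least two atoms is a positive multiple of `36`, say `36 * 2 ^ k * m` with `m` odd;
then `6 * 2 ^ k` (not divisible by `3` after removing one `6`) and `6 * m` (odd after removing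
one `6`) are atoms with product `x`. No factorization is shorter, since neither `1` nor an
atom is divisible by `36`.
-/

theorem List.pow_length_dvd_prod {M : Type*} [CommMonoid M] {d : M} {L : List M}
    (h : ∀ u ∈ L, d ∣ u) : d ^ L.length ∣ L.prod := by
  induction L with
  | nil => simp
  | cons a L ih =>
    rw [List.length_cons, pow_succ', List.prod_cons]
    exact mul_dvd_mul (h a List.mem_cons_self) (ih fun u hu => h u (List.mem_cons_of_mem a hu))

theorem mem_M66_iff {n : ℕ} : n ∈ M66 ↔ n = 1 ∨ (0 < n ∧ 6 ∣ n) := by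
  simp only [M66, Set.mem_ofPred_eq, Nat.dvd_iff_mod_eq_zero]
  omega

theorem isAtom66_iff {u : ℕ} : IsAtom66 u ↔ 0 < u ∧ 6 ∣ u ∧ ¬36 ∣ u := by
  constructor
  · rintro ⟨hM, hu, hirr⟩
    have h6 : 6 ∣ u := by rcases mem_M66_iff.mp hM with h | ⟨_, h⟩ <;> omega
    refine ⟨by omega, h6, ?_⟩
    rintro ⟨k, rfl⟩
    have := hirr 6 (6 * k) (mem_M66_iff.mpr (by omega)) (mem_M66_iff.mpr (by omega)) (by ring)
    omega
  · rintro ⟨hu, h6, h36⟩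
    refine ⟨mem_M66_iff.mpr (Or.inr ⟨hu, h6⟩), by omega, fun v w hv hw huvw => ?_⟩
    by_contra! hvw
    have h6v : 6 ∣ v := by rcases mem_M66_iff.mp hv with h | ⟨_, h⟩ <;> omega
    have h6w : 6 ∣ w := by rcases mem_M66_iff.mp hw with h | ⟨_, h⟩ <;> omega
    exact h36 (huvw ▸ mul_dvd_mul h6v h6w)

theorem exists_isAtom66_mul_of_dvd {x : ℕ} (hx : 0 < x) (h36 : 36 ∣ x) :
    ∃ u v, IsAtom66 u ∧ IsAtom66 v ∧ x = u * v := by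
  obtain ⟨N, rfl⟩ := h36
  obtain ⟨k, m, hm, hN⟩ := Nat.exists_eq_two_pow_mul_odd (n := N) (by omega)
  have hk : ¬3 ∣ 2 ^ k := fun h => by
    have := Nat.prime_three.dvd_of_dvd_pow h
    omega
  refine ⟨6 * 2 ^ k, 6 * m, isAtom66_iff.mpr ⟨by positivity, dvd_mul_right 6 _, ?_⟩,
    isAtom66_iff.mpr ⟨by grind, dvd_mul_right 6 _, ?_⟩, by rw [hN]; ring⟩
  · rintro ⟨c, hc⟩
    exact hk ⟨2 * c, by omega⟩
  · rintro ⟨c, hc⟩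
    exact Nat.not_even_iff_odd.mpr hm ⟨3 * c, by omega⟩

theorem two_le_length_of_isAtom66 {L : List ℕ} (hL : ∀ u ∈ L, IsAtom66 u) (h36 : 36 ∣ L.prod) :
    2 ≤ L.length := by
  match L, hL, h36 with
  | [], _, h36 => norm_num at h36
  | [u], hL, h36 => exact absurd (by simpa using h36) (isAtom66_iff.mp (hL u (by simp))).2.2
  | _ :: _ :: _, _, _ => simp

theorem stmt12 (x : ℕ) (L : List ℕ) (hL : ∀ u ∈ L, IsAtom66 u)
    (hlen : 2 ≤ L.length) (hprod : L.prod = x) :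
    (∃ u v, IsAtom66 u ∧ IsAtom66 v ∧ x = u * v) ∧
      IsLeast {m | ∃ L' : List ℕ, (∀ u ∈ L', IsAtom66 u) ∧ L'.prod = x ∧ m = L'.length}
        2 := by
  subst hprod
  have hpos : 0 < L.prod := List.prod_pos fun u hu => (isAtom66_iff.mp (hL u hu)).1
  have h36 : 36 ∣ L.prod := calc
    36 = 6 ^ 2 := by norm_num
    _ ∣ 6 ^ L.length := pow_dvd_pow 6 hlen
    _ ∣ L.prod := List.pow_length_dvd_prod fun u hu => (isAtom66_iff.mp (hL u hu)).2.1
  obtain ⟨u, v, hu, hv, huv⟩ := exists_isAtom66_mul_of_dvd hpos h36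
  refine ⟨⟨u, v, hu, hv, huv⟩, ⟨[u, v], by simp [hu, hv], by simp [huv], rfl⟩, ?_⟩
  rintro m ⟨L', hL', hprod', rfl⟩
  exact two_le_length_of_isAtom66 hL' (hprod' ▸ h36)
end

section
/- Let x = 28 = 2^2 · 7 in the arithmetical congruence monoid M_{4,6}, and let T_k = k(k+1)/2 denote the k-th triangular number. For every k ≥ 2 and every n with T_k ≤ n < T_{k+1}, the maximum number of distinct atoms appearing in a factorization of x^n in M_{4,6} equals k + 1. In particular, ℓ_0^M(28^n) ∈ Θ(n^{1/2}). -/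
/-- The k-th triangular number. -/
def T (k : ℕ) : ℕ := k * (k + 1) / 2

open Finset

def atom28 (e : ℕ) : ℕ := 4 * 7 ^ e

lemma seven_pow_mod_six (e : ℕ) : 7 ^ e % 6 = 1 := by
  rw [Nat.pow_mod]; norm_num

lemma atom28_injective : Function.Injective atom28 := fun a b h =>
  Nat.pow_right_injective (by norm_num) (Nat.eq_of_mul_eq_mul_left four_pos h)

lemma isAtom46_atom28 (e : ℕ) : IsAtom46 (atom28 e) := by
  have h7 := seven_pow_mod_six e
  unfold atom28
  refine ⟨Or.inr ⟨by omega, by omega⟩, by omega, fun v w hv hw hvw => ?_⟩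
  by_contra! hne
  have hv4 := (hv.resolve_left hne.1).2
  have hw4 := (hw.resolve_left hne.2).2
  -- both factors are even, so `v = 2 v'` with `v' ∣ 7^e`, forcing `v ≡ 2 (mod 6)`
  obtain ⟨v', rfl⟩ : 2 ∣ v := by omega
  obtain ⟨w', rfl⟩ : 2 ∣ w := by omega
  have hv' : v' ∣ 7 ^ e := ⟨w', by linarith⟩
  obtain ⟨i, -, rfl⟩ := (Nat.dvd_prime_pow (by norm_num)).mp hv'
  have := seven_pow_mod_six i
  omega

lemma IsAtom46.mod_six {u : ℕ} (hu : IsAtom46 u) : u % 6 = 4 :=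
  (hu.1.resolve_left hu.2.1.ne').2

lemma IsAtom46.not_eight_dvd {u : ℕ} (hu : IsAtom46 u) : ¬ 8 ∣ u := by
  rintro ⟨y, rfl⟩
  have hu4 := hu.mod_six
  have hsplit := hu.2.2 4 (2 * y) (Or.inr ⟨by norm_num, rfl⟩) (Or.inr ⟨by omega, by omega⟩)
    (by ring)
  omega

lemma IsAtom46.eq_atom28_of_dvd_pow {u n : ℕ} (hu : IsAtom46 u) (hd : u ∣ 28 ^ n) :
    ∃ e, u = atom28 e := by
  rw [show (28 : ℕ) ^ n = 2 ^ (2 * n) * 7 ^ n by rw [pow_mul, ← mul_pow]; norm_num,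
    Nat.dvd_mul] at hd
  obtain ⟨_, _, hi, hj, rfl⟩ := hd
  obtain ⟨i, -, rfl⟩ := (Nat.dvd_prime_pow Nat.prime_two).mp hi
  obtain ⟨j, -, rfl⟩ := (Nat.dvd_prime_pow (by norm_num)).mp hj
  have hi3 : i < 3 := by
    by_contra! h
    exact hu.not_eight_dvd (Dvd.dvd.mul_right (Nat.pow_dvd_pow 2 h) _)
  have h6 := hu.mod_six
  have h7 := seven_pow_mod_six j
  interval_cases i
  · omega
  · omega
  · exact ⟨j, rfl⟩

lemma prod_map_atom28 (E : List ℕ) :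
    (E.map atom28).prod = 4 ^ E.length * 7 ^ E.sum := by
  induction E with
  | nil => simp
  | cons a E ih =>
    simp only [List.map_cons, List.prod_cons, ih, atom28, List.length_cons, List.sum_cons]
    ring

lemma four_pow_mul_seven_pow_inj {a b c d : ℕ} (h : 4 ^ a * 7 ^ b = 4 ^ c * 7 ^ d) :
    a = c ∧ b = d := by
  have h2 : (2 : ℕ) ^ (2 * a) * 7 ^ b = 2 ^ (2 * c) * 7 ^ d := by simpa [pow_mul] using h
  have e2 := congrArg (fun m => m.factorization 2) h2
  have e7 := congrArg (fun m => m.factorization 7) h2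
  simp [Nat.factorization_mul, Nat.prime_two, (by norm_num : Nat.Prime 7)] at e2 e7
  omega

lemma card_toFinset_map_atom28 (E : List ℕ) :
    (E.map atom28).toFinset.card = E.toFinset.card := by
  rw [show (E.map atom28).toFinset = E.toFinset.image atom28 by ext; simp,
    card_image_of_injective _ atom28_injective]

lemma exists_exponents_of_atom_factorization {L : List ℕ} {n : ℕ} (hL : ∀ u ∈ L, IsAtom46 u)
    (hprod : L.prod = 28 ^ n) :
    ∃ E : List ℕ, L = E.map atom28 ∧ E.length = n ∧ E.sum = n := by
  obtain ⟨E, rfl⟩ : L ∈ Set.range (List.map atom28) := by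
    rw [Set.range_list_map]
    exact fun u hu => ((hL u hu).eq_atom28_of_dvd_pow (hprod ▸ List.dvd_prod hu)).imp
      fun _ h => h.symm
  rw [prod_map_atom28, show (28 : ℕ) ^ n = 4 ^ n * 7 ^ n by rw [← mul_pow]; rfl] at hprod
  exact ⟨E, rfl, four_pow_mul_seven_pow_inj hprod⟩

lemma List.sum_toFinset_id_le (E : List ℕ) : ∑ i ∈ E.toFinset, i ≤ E.sum := by
  rw [Finset.sum_list_count E]
  exact sum_le_sum fun i hi =>
    Nat.le_mul_of_pos_left i (List.count_pos_iff.mpr (List.mem_toFinset.mp hi))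

lemma Finset.sum_range_card_le_sum_id (S : Finset ℕ) :
    ∑ i ∈ range S.card, i ≤ ∑ i ∈ S, i := by
  induction S using Finset.induction_on_max with
  | empty => simp
  | insert a S ha ih =>
    have hcard : #S ≤ a := by
      simpa using card_le_card (fun x hx => mem_range.2 (ha x hx) : S ⊆ range a)
    rw [card_insert_of_notMem fun h => (ha a h).false, sum_insert fun h => (ha a h).false,
      sum_range_succ]
    omega

lemma T_eq_sum_range (k : ℕ) : T k = ∑ i ∈ range (k + 1), i := by
  rw [Finset.sum_range_id, T, Nat.add_sub_cancel, mul_comm]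

lemma card_toFinset_le_of_sum_lt {E : List ℕ} {k : ℕ} (h : E.sum < T (k + 1)) :
    E.toFinset.card ≤ k + 1 := by
  by_contra! hcard
  refine h.not_ge ?_
  calc T (k + 1) = ∑ i ∈ range (k + 1 + 1), i := T_eq_sum_range _
    _ ≤ ∑ i ∈ range E.toFinset.card, i := sum_le_sum_of_subset (range_subset_range.mpr hcard)
    _ ≤ ∑ i ∈ E.toFinset, i := E.toFinset.sum_range_card_le_sum_id
    _ ≤ E.sum := E.sum_toFinset_id_le

lemma exists_exponents_toFinset_eq_range {k n : ℕ} (hk : 2 ≤ k) (hn : T k ≤ n) :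
    ∃ E : List ℕ, E.length = n ∧ E.sum = n ∧ E.toFinset = range (k + 1) := by
  have hT : k + 1 ≤ T k := (Nat.le_div_iff_mul_le two_pos).mpr (by nlinarith)
  have hrange : (List.range (k + 1)).sum = T k := by
    simp [T_eq_sum_range, Finset.sum, range_val, Multiset.range]
  refine ⟨List.range (k + 1) ++ List.replicate (n - T k) 1 ++ List.replicate (T k - (k + 1)) 0,
    ?_, ?_, ?_⟩
  · simp only [List.length_append, List.length_range, List.length_replicate]
    omega
  · simp only [List.sum_append, hrange, List.sum_replicate, smul_eq_mul]
    omega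
  · ext x
    simp only [List.toFinset_append, List.toFinset_range, mem_union, mem_range,
      List.mem_toFinset, List.mem_replicate]
    omega

theorem stmt14 (k : ℕ) (hk : 2 ≤ k) (n : ℕ) (h1 : T k ≤ n) (h2 : n < T (k + 1)) :
    IsGreatest {m | ∃ L : List ℕ, (∀ u ∈ L, IsAtom46 u) ∧ L.prod = 28 ^ n ∧
      m = L.toFinset.card} (k + 1) := by
  constructor
  · obtain ⟨E, hlen, hsum, hset⟩ := exists_exponents_toFinset_eq_range hk h1
    refine ⟨E.map atom28, fun u hu => ?_, ?_, ?_⟩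
    · obtain ⟨e, -, rfl⟩ := List.mem_map.mp hu
      exact isAtom46_atom28 e
    · rw [prod_map_atom28, hlen, hsum, ← mul_pow]; rfl
    · rw [card_toFinset_map_atom28, hset, card_range]
  · rintro m ⟨L, hL, hprod, rfl⟩
    obtain ⟨E, rfl, -, hsum⟩ := exists_exponents_of_atom_factorization hL hprod
    rw [card_toFinset_map_atom28]
    exact card_toFinset_le_of_sum_lt (hsum ▸ h2)
end

section
/- Fix x = 2^a · 5^b · 7^c in M_{4,6} with a ≥ 1 (so x ≡ 4 mod 6). Call an atom u = 2^p 5^q 7^r of M_{4,6} good if a(q + r) ≤ 3p(b + c) and evil otherwise. Then in any factorization of x^n into atoms of M_{4,6}, if k is the number of good atoms and m the number of evil atoms counted with multiplicity, then m ≤ 2k. -/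
/-- An atom `u = 2^p 5^q 7^r` is good (relative to `x = 2^a 5^b 7^c`) if
`a(q + r) ≤ 3p(b + c)`. -/
def IsGood (a b c u : ℕ) : Prop :=
  a * (u.factorization 5 + u.factorization 7) ≤ 3 * u.factorization 2 * (b + c)

instance (a b c u : ℕ) : Decidable (IsGood a b c u) :=
  inferInstanceAs (Decidable (_ ≤ _))

/-!
Every atom `u = 2^p 5^q 7^r` of `M_{4,6}` has `p ∈ {1, 2}`: it is even, and if `8 ∣ u` then
`u = 4 · (u / 4)` with both factors `≡ 4 (mod 6)`. Put `d = b + c` and give each atom of a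
factorization of `x^n` the weight `a(q + r) - d p`. Comparing exponents, the total weight is
`a · n d - d · n a = 0`. An evil atom has weight `≥ 3pd + 1 - dp ≥ 2d + 1`, a good one has weight
`≥ -dp ≥ -2d`, so `(2d + 1) m ≤ 2d k`; in particular `m ≤ k ≤ 2k`.
-/

theorem List.mul_countP_sub_le_sum_map {α : Type*} (L : List α) (P : α → Prop) [DecidablePred P]
    (w : α → ℤ) (A B : ℤ) (hP : ∀ u ∈ L, P u → -B ≤ w u) (hnP : ∀ u ∈ L, ¬ P u → A ≤ w u) :
    A * L.countP (fun u => decide ¬ P u) - B * L.countP (fun u => decide (P u)) ≤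
      (L.map w).sum := by
  induction L with
  | nil => simp
  | cons u L ih =>
    have ih := ih (fun v hv => hP v (List.mem_cons_of_mem u hv))
      (fun v hv => hnP v (List.mem_cons_of_mem u hv))
    simp only [List.countP_cons, decide_eq_true_eq, List.map_cons, List.sum_cons]
    by_cases hu : P u
    · have := hP u List.mem_cons_self hu
      simp only [hu, not_true_eq_false, if_true, if_false]
      push_cast
      linarith
    · have := hnP u List.mem_cons_self hu
      simp only [hu, not_false_eq_true, if_true, if_false]
      push_cast
      linarith

theorem List.countP_not_le_countP_of_mul_sum_le {α : Type*} (L : List α) (p s : α → ℕ)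
    (a d : ℕ) (hp : ∀ u ∈ L, p u ∈ Set.Icc 1 2) (hsum : a * (L.map s).sum ≤ d * (L.map p).sum) :
    L.countP (fun u => decide ¬ a * s u ≤ 3 * p u * d) ≤
      L.countP (fun u => decide (a * s u ≤ 3 * p u * d)) := by
  have hweight := L.mul_countP_sub_le_sum_map (fun u => a * s u ≤ 3 * p u * d)
    (fun u => a * s u - d * p u) (2 * d + 1) (2 * d)
    (fun u hu _ => by obtain ⟨-, hp2⟩ := hp u hu; nlinarith)
    (fun u hu hbad => by
      obtain ⟨hp1, -⟩ := hp u hu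
      rw [not_le] at hbad
      zify at hbad
      nlinarith)
  have htotal : (L.map fun u => (a * s u - d * p u : ℤ)).sum ≤ 0 := by
    have hcast : ((a * (L.map s).sum : ℕ) : ℤ) ≤ (d * (L.map p).sum : ℕ) := by
      exact_mod_cast hsum
    simp only [Nat.cast_mul, Nat.cast_list_sum, List.map_map, Function.comp_def,
      ← List.sum_map_mul_left] at hcast
    have hsplit := List.sum_map_add (l := L) (f := fun u => (a * s u - d * p u : ℤ))
      (g := fun u => (d * p u : ℤ))
    simp only [sub_add_cancel] at hsplit
    linarith
  have hmk : ((2 * d + 1) * L.countP (fun u => decide ¬ a * s u ≤ 3 * p u * d) : ℤ) ≤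
      (2 * d + 1) * L.countP (fun u => decide (a * s u ≤ 3 * p u * d)) := by
    linarith [(L.countP (fun u => decide (a * s u ≤ 3 * p u * d))).cast_nonneg (α := ℤ)]
  exact_mod_cast le_of_mul_le_mul_left hmk (by positivity)

theorem Nat.factorization_list_prod_apply {L : List ℕ} (hL : ∀ u ∈ L, u ≠ 0) (p : ℕ) :
    L.prod.factorization p = (L.map (·.factorization p)).sum := by
  induction L with
  | nil => simp
  | cons u L ih =>
    rw [List.prod_cons, Nat.factorization_mul (hL u List.mem_cons_self)
      (List.prod_ne_zero fun h => hL 0 (List.mem_cons_of_mem u h) rfl), Finsupp.add_apply,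
      ih fun v hv => hL v (List.mem_cons_of_mem u hv), List.map_cons, List.sum_cons]

theorem factorization_two_pow_mul_five_pow_mul_seven_pow (a b c : ℕ) :
    (2 ^ a * 5 ^ b * 7 ^ c).factorization =
      Finsupp.single 2 a + Finsupp.single 5 b + Finsupp.single 7 c := by
  rw [Nat.factorization_mul (by positivity) (by positivity),
    Nat.factorization_mul (by positivity) (by positivity), Nat.prime_two.factorization_pow,
    Nat.prime_five.factorization_pow, (by norm_num : Nat.Prime 7).factorization_pow]

namespace IsAtom46

variable {u : ℕ}

theorem mod_six_s17 (hu : IsAtom46 u) : u % 6 = 4 := by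
  rcases hu.1 with h | h
  · exact absurd h hu.2.1.ne'
  · exact h.2

theorem ne_zero (hu : IsAtom46 u) : u ≠ 0 :=
  (zero_lt_one.trans hu.2.1).ne'

theorem factorization_two_mem_Icc (hu : IsAtom46 u) : u.factorization 2 ∈ Set.Icc 1 2 := by
  have hmod := hu.mod_six_s17
  refine ⟨Nat.prime_two.factorization_pos_of_dvd hu.ne_zero (by omega), ?_⟩
  by_contra! h3
  obtain ⟨t, rfl⟩ : 2 ^ 3 ∣ u :=
    (Nat.prime_two.pow_dvd_iff_le_factorization hu.ne_zero).mpr h3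
  have h4 : (4 : ℕ) ∈ M46 := Or.inr ⟨by norm_num, rfl⟩
  have h2t : 2 * t ∈ M46 := Or.inr ⟨by omega, by omega⟩
  rcases hu.2.2 4 (2 * t) h4 h2t (by ring) with h | h <;> omega

end IsAtom46

theorem stmt17_general (a b c : ℕ)
    (n : ℕ) (L : List ℕ) (hL : ∀ u ∈ L, IsAtom46 u)
    (hprod : L.prod = (2 ^ a * 5 ^ b * 7 ^ c) ^ n) :
    L.countP (fun u => decide (¬ IsGood a b c u)) ≤
      2 * L.countP (fun u => decide (IsGood a b c u)) := by
  have hsum (q : ℕ) : (L.map (·.factorization q)).sum =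
      n * (Finsupp.single 2 a + Finsupp.single 5 b + Finsupp.single 7 c : ℕ →₀ ℕ) q := by
    rw [← Nat.factorization_list_prod_apply fun u hu => (hL u hu).ne_zero, hprod,
      Nat.factorization_pow, factorization_two_pow_mul_five_pow_mul_seven_pow,
      Finsupp.smul_apply, smul_eq_mul]
  have hbalance : a * (L.map fun u => u.factorization 5 + u.factorization 7).sum =
      (b + c) * (L.map (·.factorization 2)).sum := by
    rw [List.sum_map_add, hsum, hsum, hsum]
    simp only [Finsupp.coe_add, Pi.add_apply, Finsupp.single_apply]
    norm_num
    ring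
  exact (L.countP_not_le_countP_of_mul_sum_le (·.factorization 2)
    (fun u => u.factorization 5 + u.factorization 7) a (b + c)
    (fun u hu => (hL u hu).factorization_two_mem_Icc) hbalance.le).trans
    (Nat.le_mul_of_pos_left _ two_pos)

theorem stmt17 (a b c : ℕ) (ha : 1 ≤ a) (hx : 2 ^ a * 5 ^ b * 7 ^ c ∈ M46)
    (n : ℕ) (L : List ℕ) (hL : ∀ u ∈ L, IsAtom46 u)
    (hprod : L.prod = (2 ^ a * 5 ^ b * 7 ^ c) ^ n) :
    L.countP (fun u => decide (¬ IsGood a b c u)) ≤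
      2 * L.countP (fun u => decide (IsGood a b c u)) :=
  stmt17_general a b c n L hL hprod
end

section
/- Let S = <2, 3> and for n in S let ℓ_3^m(n) be the minimum of z_1^3 + z_2^3 over all (z_1, z_2) in Z_{\ge 0}^2 with 2 z_1 + 3 z_2 = n. Then ℓ_3^m(n) is not an eventually quasipolynomial function of n; that is, there is no quasipolynomial g (a function of the form g(n) = c_d(n) n^d + ... + c_0(n) with each c_i periodic) agreeing with ℓ_3^m(n) for all sufficiently large n. -/
/-!
Over the reals, z₁³ + z₂³ on the segment 2z₁ + 3z₂ = n, z₁, z₂ ≥ 0 has minimum C n³ with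
C = (35 - 12√6)/361, and a lattice point of the segment within bounded distance of the minimiser
costs only O(n²) more; hence ℓ(n) = C n³ + O(n²). Along an arithmetic progression a + Pk whose
difference P is a common period of the coefficients, a quasipolynomial is a polynomial q(k).
If it agreed with ℓ there, q(k) - C (a + Pk)³ = O(k²) would force it to have degree ≤ 2, so the
third finite difference of the integers ℓ(a), ℓ(a + P), ℓ(a + 2P), ℓ(a + 3P) would be the
irrational number 6 C P³.
-/

/-- `g : ℕ → ℝ` is a quasipolynomial if it is a sum `∑ i, c i n * n ^ i`
with each coefficient function `c i` periodic. -/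
def IsQuasipolynomial (g : ℕ → ℝ) : Prop :=
  ∃ (d : ℕ) (c : Fin (d + 1) → ℕ → ℝ),
    (∀ i, ∃ p, 0 < p ∧ ∀ n, c i (n + p) = c i n) ∧
    ∀ n, g n = ∑ i : Fin (d + 1), c i n * (n : ℝ) ^ (i : ℕ)

open Polynomial

theorem IsQuasipolynomial.exists_polynomial_on_progression {g : ℕ → ℝ}
    (hg : IsQuasipolynomial g) :
    ∃ P > 0, ∀ a, ∃ q : ℝ[X], ∀ k : ℕ, q.eval (k : ℝ) = g (a + P * k) := by
  obtain ⟨d, c, hper, hg⟩ := hg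
  choose p hp_pos hp using hper
  refine ⟨∏ i, p i, Finset.prod_pos fun i _ => hp_pos i, fun a => ?_⟩
  refine ⟨∑ i, C (c i a) * (C (a : ℝ) + C ((∏ i, p i : ℕ) : ℝ) * X) ^ (i : ℕ), fun k => ?_⟩
  have hc : ∀ i, c i (a + (∏ i, p i) * k) = c i a := fun i => by
    obtain ⟨t, ht⟩ := Finset.dvd_prod_of_mem p (Finset.mem_univ i)
    have : (∏ i, p i) * k = (t * k : ℕ) * p i := by rw [ht]; ring
    rw [this]
    exact Function.Periodic.nat_mul (hp i) (t * k) a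
  simp only [hg, eval_finsetSum, eval_mul, eval_pow, eval_add, eval_C, eval_X, hc]
  push_cast
  rfl

theorem Polynomial.eval_three_sub_eq_zero {R : Type*} [CommRing R] {r : R[X]}
    (hr : r.natDegree ≤ 2) : r.eval 3 - 3 * r.eval 2 + 3 * r.eval 1 - r.eval 0 = 0 := by
  have h := congrFun (fwdDiff_iter_eq_zero_of_degree_lt (n := 3) (by omega : r.natDegree < 3)) 0
  rw [fwdDiff_iter_eq_sum_shift] at h
  simp only [Finset.sum_range_succ, Finset.sum_range_zero] at h
  norm_num at h
  linear_combination h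

theorem Polynomial.natDegree_le_of_abs_eval_natCast_le {p : ℝ[X]} {K : ℝ} {j : ℕ}
    (h : ∀ k : ℕ, |p.eval (k : ℝ)| ≤ K * ((k : ℝ) + 1) ^ j) : p.natDegree ≤ j := by
  by_contra! hj
  set Q : ℝ[X] := (X + C 1) ^ j
  have hQ : Q ≠ 0 := pow_ne_zero _ (X_add_C_ne_zero 1)
  have hdeg : Q.degree < p.degree := by
    rw [degree_pow, degree_X_add_C, nsmul_one]
    exact (Nat.cast_lt.mpr hj).trans_le (degree_eq_natDegree (by rintro rfl; simp at hj)).ge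
  have hlim := (abs_div_tendsto_atTop_atTop_of_degree_gt p Q hdeg hQ).comp
    tendsto_natCast_atTop_atTop
  obtain ⟨k, hk⟩ := (hlim.eventually_gt_atTop K).exists
  have hpos : (0 : ℝ) < ((k : ℝ) + 1) ^ j := by positivity
  have : |p.eval (k : ℝ) / Q.eval (k : ℝ)| ≤ K := by
    simp only [Q, eval_pow, eval_add, eval_X, eval_C, abs_div, abs_of_pos hpos]
    exact (div_le_iff₀ hpos).mpr (h k)
  exact lt_irrefl _ (this.trans_lt hk)

theorem eval_three_sub_eq_of_abs_sub_cube_le {q : ℝ[X]} {c a P K : ℝ}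
    (h : ∀ k : ℕ, |q.eval (k : ℝ) - c * (a + P * k) ^ 3| ≤ K * ((k : ℝ) + 1) ^ 2) :
    q.eval 3 - 3 * q.eval 2 + 3 * q.eval 1 - q.eval 0 = 6 * c * P ^ 3 := by
  set r := q - C c * (C a + C P * X) ^ 3
  have hr : ∀ x, r.eval x = q.eval x - c * (a + P * x) ^ 3 := fun x => by simp [r]
  have h3 := eval_three_sub_eq_zero (natDegree_le_of_abs_eval_natCast_le (p := r) (by simpa [hr]))
  simp only [hr] at h3
  linear_combination h3

noncomputable def cubeConst : ℝ := (35 - 12 * √6) / 361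

/- `(cubeMinX, cubeMinY)` minimises `x³ + y³` on `2x + 3y = 1`, `x, y ≥ 0`: by Lagrange,
`x² : y² = 2 : 3`, and the minimum `cubeConst = 1 / (2√2 + 3√3)²`. -/
noncomputable def cubeMinX : ℝ := (3 * √6 - 4) / 19

noncomputable def cubeMinY : ℝ := (9 - 2 * √6) / 19

theorem irrational_cubeConst : Irrational cubeConst := by
  have h6 : Irrational √6 := irrational_sqrt_ofNat_iff.mpr (by decide +kernel)
  rintro ⟨r, hr⟩
  exact h6 ⟨(35 - 361 * r) / 12, by push_cast; rw [hr, cubeConst]; ring⟩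

private theorem sq_sqrt_six : √6 ^ 2 = 6 := Real.sq_sqrt (by norm_num)

private theorem sqrt_six_bounds : 2.4 ≤ √6 ∧ √6 ≤ 2.5 := by
  have := Real.sqrt_nonneg 6
  constructor <;> nlinarith [sq_sqrt_six]

theorem cubeMinX_nonneg : 0 ≤ cubeMinX := by unfold cubeMinX; linarith [sqrt_six_bounds.1]

theorem cubeMinY_nonneg : 0 ≤ cubeMinY := by unfold cubeMinY; linarith [sqrt_six_bounds.2]

theorem two_mul_cubeMinX_add_three_mul_cubeMinY : 2 * cubeMinX + 3 * cubeMinY = 1 := by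
  unfold cubeMinX cubeMinY; ring

theorem cubeMinX_sq : cubeMinX ^ 2 = 2 * cubeConst := by
  unfold cubeMinX cubeConst; linear_combination (9 / 361 : ℝ) * sq_sqrt_six

theorem cubeMinY_sq : cubeMinY ^ 2 = 3 * cubeConst := by
  unfold cubeMinY cubeConst; linear_combination (4 / 361 : ℝ) * sq_sqrt_six

theorem cubeMinX_pow_three_add_cubeMinY_pow_three :
    cubeMinX ^ 3 + cubeMinY ^ 3 = cubeConst := by
  unfold cubeMinX cubeMinY cubeConst; linear_combination (√6 / 361) * sq_sqrt_six

theorem cubeConst_mul_le (a b : ℝ) (ha : 0 ≤ a) (hb : 0 ≤ b) :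
    cubeConst * (2 * a + 3 * b) ^ 3 ≤ a ^ 3 + b ^ 3 := by
  have tangent : ∀ s t : ℝ, 0 ≤ s → 0 ≤ t → 3 * s ^ 2 * t - 2 * s ^ 3 ≤ t ^ 3 := fun s t hs ht => by
    nlinarith [mul_nonneg (sq_nonneg (t - s)) (by positivity : 0 ≤ t + 2 * s)]
  generalize hn_def : 2 * a + 3 * b = n
  have hn : 0 ≤ n := hn_def ▸ by positivity
  have hx := tangent (cubeMinX * n) a (mul_nonneg cubeMinX_nonneg hn) ha
  have hy := tangent (cubeMinY * n) b (mul_nonneg cubeMinY_nonneg hn) hb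
  linear_combination hx + hy - 3 * n ^ 2 * a * cubeMinX_sq - 3 * n ^ 2 * b * cubeMinY_sq
    + 2 * n ^ 3 * cubeMinX_pow_three_add_cubeMinY_pow_three - 3 * cubeConst * n ^ 2 * hn_def

theorem exists_two_mul_add_three_mul_eq_near (n : ℕ) {t : ℝ} (ht : 0 ≤ t) (htn : 3 * t + 3 ≤ n) :
    ∃ z₁ z₂ : ℕ, 2 * z₁ + 3 * z₂ = n ∧ (z₁ : ℝ) ≤ (n - 3 * t) / 2 + 3 ∧ (z₂ : ℝ) ≤ t + 1 := by
  set w := ⌊t / 2⌋₊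
  have hw : (w : ℝ) ≤ t / 2 := Nat.floor_le (by positivity)
  have hw' : t / 2 < w + 1 := Nat.lt_floor_add_one _
  have hpar : ((n % 2 : ℕ) : ℝ) ≤ 1 := by exact_mod_cast Nat.le_of_lt_succ (Nat.mod_lt n two_pos)
  set z₂ := 2 * w + n % 2
  have hz₂ : (z₂ : ℝ) ≤ t + 1 := by simp only [z₂]; push_cast; linarith
  have hz₂n : 3 * z₂ ≤ n := by exact_mod_cast (by linarith : (3 * z₂ : ℝ) ≤ n)
  have hz₁ : 2 * ((n - 3 * z₂) / 2) = n - 3 * z₂ := by omega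
  refine ⟨(n - 3 * z₂) / 2, z₂, by omega, ?_, hz₂⟩
  have : (2 * ((n - 3 * z₂) / 2 : ℕ) : ℝ) = n - 3 * z₂ := by exact_mod_cast hz₁
  push_cast [z₂] at this ⊢
  linarith

def cubeCosts (n : ℕ) : Set ℕ := {l | ∃ z₁ z₂ : ℕ, 2 * z₁ + 3 * z₂ = n ∧ l = z₁ ^ 3 + z₂ ^ 3}

theorem exists_mem_cubeCosts_le {n : ℕ} (hn : 20 ≤ n) :
    ∃ l ∈ cubeCosts n, (l : ℝ) ≤ cubeConst * n ^ 3 + 70 * n ^ 2 := by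
  have hnR : (20 : ℝ) ≤ n := by exact_mod_cast hn
  have hx : cubeMinX ≤ 1 := by unfold cubeMinX; linarith [sqrt_six_bounds.2]
  have hy : cubeMinY ≤ 1 / 4 := by unfold cubeMinY; linarith [sqrt_six_bounds.1]
  obtain ⟨z₁, z₂, hz, hz₁, hz₂⟩ := exists_two_mul_add_three_mul_eq_near n
    (mul_nonneg cubeMinY_nonneg (by positivity)) (by nlinarith)
  have hxn : ((n : ℝ) - 3 * (cubeMinY * n)) / 2 = cubeMinX * n := by
    linear_combination -(n / 2 : ℝ) * two_mul_cubeMinX_add_three_mul_cubeMinY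
  rw [hxn] at hz₁
  refine ⟨z₁ ^ 3 + z₂ ^ 3, ⟨z₁, z₂, hz, rfl⟩, ?_⟩
  have h₁ := pow_le_pow_left₀ (Nat.cast_nonneg _) hz₁ 3
  have h₂ := pow_le_pow_left₀ (Nat.cast_nonneg _) hz₂ 3
  have hX := cubeMinX_nonneg
  have hY := cubeMinY_nonneg
  have expand : (cubeMinX * n + 3) ^ 3 + (cubeMinY * n + 1) ^ 3 = cubeConst * n ^ 3
      + (9 * cubeMinX ^ 2 + 3 * cubeMinY ^ 2) * n ^ 2 + (27 * cubeMinX + 3 * cubeMinY) * n + 28 := by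
    rw [← cubeMinX_pow_three_add_cubeMinY_pow_three]; ring
  have h12 : 9 * cubeMinX ^ 2 + 3 * cubeMinY ^ 2 ≤ 12 := by nlinarith
  have h30 : 27 * cubeMinX + 3 * cubeMinY ≤ 30 := by linarith
  push_cast
  nlinarith [mul_le_mul_of_nonneg_right h12 (sq_nonneg (n : ℝ)),
    mul_le_mul_of_nonneg_right h30 (Nat.cast_nonneg n)]

theorem exists_isLeast_cubeCosts {n : ℕ} (hn : 20 ≤ n) :
    ∃ m, IsLeast (cubeCosts n) m ∧ |(m : ℝ) - cubeConst * n ^ 3| ≤ 70 * n ^ 2 := by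
  obtain ⟨l, hl, hle⟩ := exists_mem_cubeCosts_le hn
  have hleast := isLeast_csInf ⟨l, hl⟩
  refine ⟨_, hleast, abs_le.mpr ⟨?_, ?_⟩⟩
  · obtain ⟨z₁, z₂, hz, hm⟩ := hleast.1
    have hzR : (n : ℝ) = 2 * z₁ + 3 * z₂ := by exact_mod_cast hz.symm
    have := cubeConst_mul_le z₁ z₂ (Nat.cast_nonneg _) (Nat.cast_nonneg _)
    rw [hm, hzR]; push_cast
    nlinarith
  · have : ((sInf (cubeCosts n) : ℕ) : ℝ) ≤ l := Nat.cast_le.mpr (hleast.2 hl)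
    linarith

theorem stmt19 :
    ¬ ∃ g : ℕ → ℝ, IsQuasipolynomial g ∧ ∃ N : ℕ, ∀ n ≥ N,
      ∀ m : ℕ, IsLeast {l | ∃ z₁ z₂ : ℕ, 2 * z₁ + 3 * z₂ = n ∧ l = z₁ ^ 3 + z₂ ^ 3} m →
        (m : ℝ) = g n := by
  rintro ⟨g, hg, N, hN⟩
  obtain ⟨P, hP, hprog⟩ := hg.exists_polynomial_on_progression
  set a := max N 20
  obtain ⟨q, hq⟩ := hprog a
  have hvalues : ∀ k : ℕ, ∃ m : ℕ, q.eval (k : ℝ) = m ∧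
      |q.eval (k : ℝ) - cubeConst * (a + P * k) ^ 3| ≤ 70 * (a + P) ^ 2 * ((k : ℝ) + 1) ^ 2 := by
    intro k
    obtain ⟨m, hm, hbound⟩ := exists_isLeast_cubeCosts (n := a + P * k) (by omega)
    have hmq : q.eval (k : ℝ) = m := by rw [hq, hN _ (by omega) m hm]
    refine ⟨m, hmq, ?_⟩
    have hlin : (a : ℝ) + P * k ≤ (a + P) * (k + 1) := by nlinarith [Nat.cast_nonneg (α := ℝ) a]
    push_cast at hbound
    rw [hmq]
    refine hbound.trans ?_
    nlinarith [pow_le_pow_left₀ (by positivity) hlin 2]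
  choose m hm hbound using hvalues
  have hdiff := eval_three_sub_eq_of_abs_sub_cube_le hbound
  have h0 := hm 0; have h1 := hm 1; have h2 := hm 2; have h3 := hm 3
  norm_num at h0 h1 h2 h3
  refine (irrational_cubeConst.mul_natCast (m := 6 * P ^ 3) (by positivity)).ne_int
    (m 3 - 3 * m 2 + 3 * m 1 - m 0) ?_
  push_cast
  linear_combination -hdiff + h3 - 3 * h2 + 3 * h1 - h0
end
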